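/- arXiv:2310.20397 — 2 statements merged into one kernel-verified Lean document; each statement's English description precedes it below -/
import Mathlib

section
/- For j = 1,…,m, let G_j ⊆ E_j, let A_j be a set-valued operator from E_j to subsets of E_j, let t_j > 0 and τ_j ≥ 0, and assume: for all u_j, v_j ∈ G_j and all z_j ∈ t_j·A_j(u_j), w_j ∈ t_j·A_j(v_j), ⟨z_j − w_j, u_j − v_j⟩ ≥ −(τ_j/2)‖(u_j + z_j) − (v_j + w_j)‖². Set τ := max_j τ_j and G := ∏_j G_j. Then the resolvent of the scaled product operator is a$\alpha$-fne on G with constant 1/2 and violation τ; explicitly: for all x, y ∈ E and all u, v ∈ G such that x_j − u_j ∈ t_j·A_j(u_j) and y_j − v_j ∈ t_j·A_j(v_j) for every j, one has ‖u − v‖² ≤ (1 + τ)‖x − y‖² − ‖(x − u) − (y − v)‖². -/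
open Finset
open scoped RealInnerProductSpace

noncomputable section

variable {m : ℕ} {I : Type*} [Fintype I]
variable {E : Fin m → Type*} [∀ j, NormedAddCommGroup (E j)]
  [∀ j, InnerProductSpace ℝ (E j)] [∀ j, FiniteDimensional ℝ (E j)]

/-- The blockwise map `T_i`: applies `T'_j` on the blocks `j ∈ M i`, identity elsewhere. -/
def blockMap (M : I → Finset (Fin m)) (T' : ∀ j, PiLp 2 E → E j)
    (i : I) (x : PiLp 2 E) : PiLp 2 E :=
  WithLp.toLp 2 (fun j => if j ∈ M i then T' j x else x j)

/-- The squared weighted norm `‖z‖_p²  =  ∑ⱼ pⱼ⁻¹ ‖zⱼ‖²`. -/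
def wNormSq (pw : Fin m → ℝ) (z : PiLp 2 E) : ℝ :=
  ∑ j, (pw j)⁻¹ * ‖z j‖ ^ 2

/-- The weighted norm `‖z‖_p`. -/
def wNorm (pw : Fin m → ℝ) (z : PiLp 2 E) : ℝ :=
  Real.sqrt (wNormSq pw z)

/-! Writing `p := (x - u) - (y - v)`, one has `x - y = (u - v) + p`, so
`‖x - y‖² = ‖u - v‖² + 2⟪p, u - v⟫ + ‖p‖²`; the lower bound on `⟪p, u - v⟫` given by
submonotonicity is then exactly the violated firm nonexpansiveness inequality on each block,
and both sides of that inequality add up over the blocks of `PiLp 2 E`. -/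

lemma norm_sub_sq_le_of_neg_mul_le_inner {F : Type*} [NormedAddCommGroup F]
    [InnerProductSpace ℝ F] {c : ℝ} {x y u v : F}
    (h : -(c / 2) * ‖x - y‖ ^ 2 ≤ ⟪(x - u) - (y - v), u - v⟫) :
    ‖u - v‖ ^ 2 ≤ (1 + c) * ‖x - y‖ ^ 2 - ‖(x - u) - (y - v)‖ ^ 2 := by
  have hsplit : x - y = (u - v) + ((x - u) - (y - v)) := by abel
  have hexpand := norm_add_sq_real (u - v) ((x - u) - (y - v))
  rw [← hsplit, real_inner_comm] at hexpand
  linarith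

lemma PiLp.norm_sub_sq_le_of_forall {ι : Type*} [Fintype ι] {F : ι → Type*}
    [∀ i, SeminormedAddCommGroup (F i)] {c : ℝ} {x y u v : PiLp 2 F}
    (h : ∀ i, ‖u i - v i‖ ^ 2 ≤ (1 + c) * ‖x i - y i‖ ^ 2 - ‖(x i - u i) - (y i - v i)‖ ^ 2) :
    ‖u - v‖ ^ 2 ≤ (1 + c) * ‖x - y‖ ^ 2 - ‖(x - u) - (y - v)‖ ^ 2 := by
  simp only [PiLp.norm_sq_eq_of_L2, PiLp.sub_apply, Finset.mul_sum, ← Finset.sum_sub_distrib]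
  exact Finset.sum_le_sum fun i _ => h i

theorem statement16_general
    (Gset : ∀ j, Set (E j))
    (A : ∀ j, E j → Set (E j))
    (t : Fin m → ℝ)
    (τj : Fin m → ℝ)
    (hsubmono : ∀ j, ∀ u ∈ Gset j, ∀ v ∈ Gset j, ∀ z w : E j,
      (∃ a ∈ A j u, z = t j • a) → (∃ b ∈ A j v, w = t j • b) →
        -(τj j / 2) * ‖(u + z) - (v + w)‖ ^ 2 ≤ ⟪z - w, u - v⟫)
    (τ : ℝ) (hτ : IsGreatest (Set.range τj) τ) :
    ∀ x y : PiLp 2 E, ∀ u v : PiLp 2 E,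
      (∀ j, u j ∈ Gset j) → (∀ j, v j ∈ Gset j) →
      (∀ j, ∃ a ∈ A j (u j), x j - u j = t j • a) →
      (∀ j, ∃ b ∈ A j (v j), y j - v j = t j • b) →
        ‖u - v‖ ^ 2 ≤ (1 + τ) * ‖x - y‖ ^ 2 - ‖(x - u) - (y - v)‖ ^ 2 := by
  intro x y u v hu hv hx hy
  refine PiLp.norm_sub_sq_le_of_forall fun j => norm_sub_sq_le_of_neg_mul_le_inner ?_
  have hblock := hsubmono j (u j) (hu j) (v j) (hv j) _ _ (hx j) (hy j)
  rw [add_sub_cancel, add_sub_cancel] at hblock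
  have hτj : τj j ≤ τ := hτ.2 ⟨j, rfl⟩
  nlinarith [sq_nonneg ‖x j - y j‖]

/-- the resolvent of a blockwise submonotone (prox-regular type) family of
set-valued operators is aα-fne with constant `1/2` and violation `τ = maxⱼ τⱼ` on `G = ∏ⱼ Gⱼ`. -/
theorem statement16
    (Gset : ∀ j, Set (E j))
    (A : ∀ j, E j → Set (E j))
    (t : Fin m → ℝ) (ht : ∀ j, 0 < t j)
    (τj : Fin m → ℝ) (hτj : ∀ j, 0 ≤ τj j)
    (hsubmono : ∀ j, ∀ u ∈ Gset j, ∀ v ∈ Gset j, ∀ z w : E j,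
      (∃ a ∈ A j u, z = t j • a) → (∃ b ∈ A j v, w = t j • b) →
        -(τj j / 2) * ‖(u + z) - (v + w)‖ ^ 2 ≤ ⟪z - w, u - v⟫)
    (τ : ℝ) (hτ : IsGreatest (Set.range τj) τ) :
    ∀ x y : PiLp 2 E, ∀ u v : PiLp 2 E,
      (∀ j, u j ∈ Gset j) → (∀ j, v j ∈ Gset j) →
      (∀ j, ∃ a ∈ A j (u j), x j - u j = t j • a) →
      (∀ j, ∃ b ∈ A j (v j), y j - v j = t j • b) →
        ‖u - v‖ ^ 2 ≤ (1 + τ) * ‖x - y‖ ^ 2 - ‖(x - u) - (y - v)‖ ^ 2 :=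
  statement16_general Gset A t τj hsubmono τ hτ
end
end

section
/- Let f : E → ℝ be convex and differentiable, and assume the blockwise Lipschitz gradient condition: there are L_j > 0 with Σ_j ‖g_j(x) − g_j(y)‖² ≤ Σ_j L_j²‖x_j − y_j‖² for all x, y ∈ E, where g_j(x) ∈ E_j is the j-th block of the gradient ∇f(x); set L̄ := max_j L_j. Fix ᾱ ∈ (0,1) and a uniform step size t with 0 < t ≤ 2ᾱ/L̄, and define T_GD x := x − t∇f(x). Then T_GD is α-fne on E with constant ᾱ and no violation: for all x, y ∈ E, ‖T_GD x − T_GD y‖² ≤ ‖x − y‖² − ((1−ᾱ)/ᾱ)‖(x − T_GD x) − (y − T_GD y)‖². -/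
/-!
Since every `L j ≤ L̄`, the blockwise condition makes `∇f` globally `L̄`-Lipschitz. By the
Baillon–Haddad theorem, the gradient of a convex function with `L̄`-Lipschitz gradient is
`1/L̄`-cocoercive: `‖∇f x - ∇f y‖² ≤ L̄ ⟪∇f x - ∇f y, x - y⟫`. Expanding
`‖(x - y) - t (∇f x - ∇f y)‖²` and using cocoercivity, the bound `t L̄ ≤ 2ᾱ` is exactly what makes
`x ↦ x - t ∇f x` satisfy the `ᾱ`-fne inequality.
-/

open Finset
open scoped RealInnerProductSpace

noncomputable section

variable {m : ℕ} {I : Type*} [Fintype I]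
variable {E : Fin m → Type*} [∀ j, NormedAddCommGroup (E j)]
  [∀ j, InnerProductSpace ℝ (E j)] [∀ j, FiniteDimensional ℝ (E j)]

open scoped NNReal

section Gradient

variable {F : Type*} [NormedAddCommGroup F] [InnerProductSpace ℝ F] [CompleteSpace F]
  {f : F → ℝ} {K : ℝ≥0}

theorem hasDerivAt_comp_add_smul (hf : Differentiable ℝ f) (x v : F) (s : ℝ) :
    HasDerivAt (fun s : ℝ => f (x + s • v)) ⟪gradient f (x + s • v), v⟫ s := by
  have hpath : HasDerivAt (fun s : ℝ => x + s • v) v s := by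
    simpa using ((hasDerivAt_id s).smul_const v).const_add x
  have h := (hf _).hasGradientAt.hasFDerivAt.comp_hasDerivAt s hpath
  rwa [InnerProductSpace.toDual_apply_apply] at h

theorem ConvexOn.add_inner_gradient_le (hconv : ConvexOn ℝ Set.univ f)
    (hf : Differentiable ℝ f) (y z : F) :
    f y + ⟪gradient f y, z - y⟫ ≤ f z := by
  have hline : ConvexOn ℝ Set.univ (fun s : ℝ => f (y + s • (z - y))) := by
    have := hconv.comp_affineMap (AffineMap.lineMap y z : ℝ →ᵃ[ℝ] F)
    simpa [Function.comp_def, AffineMap.lineMap_apply, add_comm] using this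
  have hslope := hline.le_slope_of_hasDerivAt (Set.mem_univ 0) (Set.mem_univ 1) one_pos
    (by simpa only [zero_smul, add_zero] using hasDerivAt_comp_add_smul hf y (z - y) 0)
  simp only [slope_def_field, zero_smul, one_smul, add_zero, add_sub_cancel, sub_zero,
    div_one] at hslope
  linarith

/-- The descent lemma. -/
theorem le_add_inner_gradient_add_sq (hf : Differentiable ℝ f)
    (hlip : LipschitzWith K (gradient f)) (y z : F) :
    f z ≤ f y + ⟪gradient f y, z - y⟫ + K / 2 * ‖z - y‖ ^ 2 := by
  set v := z - y
  set φ : ℝ → ℝ := fun s => f (y + s • v) - s * ⟪gradient f y, v⟫ - K / 2 * s ^ 2 * ‖v‖ ^ 2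
  have hφ' : ∀ s, HasDerivAt φ
      (⟪gradient f (y + s • v), v⟫ - ⟪gradient f y, v⟫ - K * s * ‖v‖ ^ 2) s := by
    intro s
    refine (((hasDerivAt_comp_add_smul hf y v s).sub
      ((hasDerivAt_id s).mul_const ⟪gradient f y, v⟫)).sub
      (((hasDerivAt_pow 2 s).const_mul (K / 2 : ℝ)).mul_const (‖v‖ ^ 2))).congr_deriv ?_
    simp only [Nat.cast_ofNat, Nat.add_one_sub_one, pow_one, one_mul]
    ring
  have hφ'_nonpos : ∀ s ∈ interior (Set.Ici (0 : ℝ)),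
      ⟪gradient f (y + s • v), v⟫ - ⟪gradient f y, v⟫ - K * s * ‖v‖ ^ 2 ≤ 0 := by
    intro s hs
    rw [interior_Ici] at hs
    have hgrad : ‖gradient f (y + s • v) - gradient f y‖ ≤ K * (s * ‖v‖) := by
      simpa [norm_smul, abs_of_pos (Set.mem_Ioi.1 hs)] using hlip.norm_sub_le (y + s • v) y
    have hcs := real_inner_le_norm (gradient f (y + s • v) - gradient f y) v
    rw [inner_sub_left] at hcs
    nlinarith [norm_nonneg v]
  have hanti := antitoneOn_of_hasDerivWithinAt_nonpos (convex_Ici 0)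
    (continuous_iff_continuousAt.2 fun s => (hφ' s).continuousAt).continuousOn
    (fun s _ => (hφ' s).hasDerivWithinAt) hφ'_nonpos
  have h01 := hanti (Set.mem_Ici.2 le_rfl) (Set.mem_Ici.2 zero_le_one) zero_le_one
  simp only [φ, v, zero_smul, one_smul, add_zero, add_sub_cancel] at h01
  linarith

/-- Apply the first-order condition at the point `a - K⁻¹ • (∇f a - ∇f b)` and the descent lemma
between that point and `a`. -/
theorem ConvexOn.add_inner_gradient_add_sq_le (hconv : ConvexOn ℝ Set.univ f)
    (hf : Differentiable ℝ f) (hlip : LipschitzWith K (gradient f)) (a b : F) :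
    f b + ⟪gradient f b, a - b⟫ + ‖gradient f a - gradient f b‖ ^ 2 / (2 * K) ≤ f a := by
  set g := gradient f a - gradient f b
  set c := a - (K : ℝ)⁻¹ • g
  have hconvex := hconv.add_inner_gradient_le hf b c
  have hdescent := le_add_inner_gradient_add_sq hf hlip a c
  have hcb : ⟪gradient f b, c - b⟫ = ⟪gradient f b, a - b⟫ - (K : ℝ)⁻¹ * ⟪gradient f b, g⟫ := by
    rw [show c - b = (a - b) - (K : ℝ)⁻¹ • g by simp only [c]; abel, inner_sub_right,
      real_inner_smul_right]
  have hca : ⟪gradient f a, c - a⟫ = -((K : ℝ)⁻¹ * ⟪gradient f a, g⟫) := by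
    rw [show c - a = -((K : ℝ)⁻¹ • g) by simp only [c]; abel, inner_neg_right,
      real_inner_smul_right]
  have hnorm : ‖c - a‖ ^ 2 = (K : ℝ)⁻¹ ^ 2 * ‖g‖ ^ 2 := by
    rw [show c - a = -((K : ℝ)⁻¹ • g) by simp only [c]; abel, norm_neg, norm_smul, mul_pow,
      Real.norm_eq_abs, sq_abs]
  have hg : ⟪gradient f a, g⟫ - ⟪gradient f b, g⟫ = ‖g‖ ^ 2 := by
    rw [← inner_sub_left, real_inner_self_eq_norm_sq]
  have hK : (K : ℝ) / 2 * ((K : ℝ)⁻¹ ^ 2 * ‖g‖ ^ 2) = ‖g‖ ^ 2 / (2 * K) := by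
    linear_combination (‖g‖ ^ 2 / 2) * div_self_mul_self' (K : ℝ)
  rw [hcb] at hconvex
  rw [hca, hnorm, hK] at hdescent
  linear_combination hconvex + hdescent - (K : ℝ)⁻¹ * hg

/-- The Baillon–Haddad theorem. -/
theorem ConvexOn.norm_sq_gradient_sub_le (hconv : ConvexOn ℝ Set.univ f)
    (hf : Differentiable ℝ f) (hlip : LipschitzWith K (gradient f)) (x y : F) :
    ‖gradient f x - gradient f y‖ ^ 2 ≤ K * ⟪gradient f x - gradient f y, x - y⟫ := by
  rcases eq_or_ne (K : ℝ) 0 with hK | hK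
  · have hgrad := hlip.norm_sub_le x y
    rw [hK, zero_mul] at hgrad
    rw [norm_le_zero_iff.1 hgrad, norm_zero, hK]
    simp
  have hxy := hconv.add_inner_gradient_add_sq_le hf hlip x y
  have hyx := hconv.add_inner_gradient_add_sq_le hf hlip y x
  rw [norm_sub_rev] at hyx
  have hinner : ⟪gradient f x - gradient f y, x - y⟫
      = -⟪gradient f x, y - x⟫ - ⟪gradient f y, x - y⟫ := by
    rw [inner_sub_left, ← inner_neg_right, neg_sub]
  have hsum : ‖gradient f x - gradient f y‖ ^ 2 / K ≤ ⟪gradient f x - gradient f y, x - y⟫ := by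
    rw [hinner]
    linear_combination hxy + hyx
  rwa [div_le_iff₀' (lt_of_le_of_ne K.coe_nonneg hK.symm)] at hsum

end Gradient

/-- The `α`-fne property with no violation; for `0 < α < 1` it is `α`-averagedness. -/
def IsAlphaFirmlyNonexpansive {F : Type*} [NormedAddCommGroup F] (α : ℝ) (T : F → F) : Prop :=
  ∀ x y, ‖T x - T y‖ ^ 2 ≤ ‖x - y‖ ^ 2 - ((1 - α) / α) * ‖(x - T x) - (y - T y)‖ ^ 2

theorem isAlphaFirmlyNonexpansive_sub_smul {F : Type*} [NormedAddCommGroup F]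
    [InnerProductSpace ℝ F] {G : F → F} {K : ℝ≥0}
    (hG : ∀ x y, ‖G x - G y‖ ^ 2 ≤ K * ⟪G x - G y, x - y⟫) {α t : ℝ} (hα : 0 < α) (ht : 0 ≤ t)
    (htK : t * K ≤ 2 * α) :
    IsAlphaFirmlyNonexpansive α (fun x => x - t • G x) := by
  intro x y
  set g := G x - G y
  have hstep : x - t • G x - (y - t • G y) = (x - y) - t • g := by
    simp only [g, smul_sub]; abel
  have hres : x - (x - t • G x) - (y - (y - t • G y)) = t • g := by
    simp only [g, smul_sub]; abel
  have hinner_nonneg : 0 ≤ ⟪g, x - y⟫ := by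
    rcases K.coe_nonneg.eq_or_lt with hK | hK
    · have hg : g = 0 := by simpa [← hK] using hG x y
      simp [hg]
    · exact nonneg_of_mul_nonneg_right ((sq_nonneg _).trans (hG x y)) hK
  have hkey : t ^ 2 * ‖g‖ ^ 2 / α ≤ 2 * (t * ⟪x - y, g⟫) := by
    rw [div_le_iff₀ hα, real_inner_comm]
    calc t ^ 2 * ‖g‖ ^ 2 ≤ t ^ 2 * (K * ⟪g, x - y⟫) := by gcongr; exact hG x y
      _ = t * (t * K) * ⟪g, x - y⟫ := by ring
      _ ≤ t * (2 * α) * ⟪g, x - y⟫ := by gcongr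
      _ = 2 * (t * ⟪g, x - y⟫) * α := by ring
  simp only [hstep, hres, norm_sub_sq_real, real_inner_smul_right, norm_smul, Real.norm_eq_abs,
    abs_of_nonneg ht, mul_pow]
  have hsplit : (1 - α) / α * (t ^ 2 * ‖g‖ ^ 2) = t ^ 2 * ‖g‖ ^ 2 / α - t ^ 2 * ‖g‖ ^ 2 := by
    field_simp
  linarith

theorem PiLp.norm_le_mul_of_sum_sq_le {ι : Type*} [Fintype ι] {β : ι → Type*}
    [∀ j, SeminormedAddCommGroup (β j)] {u w : PiLp 2 β} {L : ι → ℝ} {C : ℝ} (hC : 0 ≤ C)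
    (hL : ∀ j, |L j| ≤ C) (h : ∑ j, ‖u j‖ ^ 2 ≤ ∑ j, L j ^ 2 * ‖w j‖ ^ 2) :
    ‖u‖ ≤ C * ‖w‖ := by
  refine (pow_le_pow_iff_left₀ (norm_nonneg u) (by positivity) two_ne_zero).1 ?_
  rw [mul_pow, PiLp.norm_sq_eq_of_L2, PiLp.norm_sq_eq_of_L2, Finset.mul_sum]
  refine h.trans (Finset.sum_le_sum fun j _ => ?_)
  exact mul_le_mul_of_nonneg_right (sq_le_sq' (neg_le_of_abs_le (hL j)) (le_of_abs_le (hL j)))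
    (sq_nonneg _)

/-- for a convex differentiable function with blockwise Lipschitz gradient, the
gradient descent map with uniform step `0 < t ≤ 2ᾱ/L̄` is α-fne on `E` with constant `ᾱ` and no
violation. -/
theorem statement18
    (f : PiLp 2 E → ℝ) (hconv : ConvexOn ℝ Set.univ f) (hf : Differentiable ℝ f)
    (L : Fin m → ℝ) (hL : ∀ j, 0 < L j)
    (hLip : ∀ x y : PiLp 2 E,
      ∑ j, ‖gradient f x j - gradient f y j‖ ^ 2 ≤ ∑ j, (L j) ^ 2 * ‖x j - y j‖ ^ 2)
    (Lbar : ℝ) (hLbar : IsGreatest (Set.range L) Lbar)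
    (α : ℝ) (hα : α ∈ Set.Ioo (0 : ℝ) 1)
    (t : ℝ) (ht : 0 < t) (ht' : t ≤ 2 * α / Lbar)
    (T : PiLp 2 E → PiLp 2 E)
    (hT : ∀ x : PiLp 2 E, T x = x - t • gradient f x) :
    ∀ x y : PiLp 2 E,
      ‖T x - T y‖ ^ 2
        ≤ ‖x - y‖ ^ 2 - ((1 - α) / α) * ‖(x - T x) - (y - T y)‖ ^ 2 := by
  obtain rfl : T = fun x => x - t • gradient f x := funext hT
  obtain ⟨⟨j₀, hj₀⟩, hLbar_ge⟩ := hLbar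
  have hLbar_pos : 0 < Lbar := hj₀ ▸ hL j₀
  have hlip : LipschitzWith ⟨Lbar, hLbar_pos.le⟩ (gradient f) :=
    LipschitzWith.of_dist_le_mul fun a b => by
      rw [dist_eq_norm, dist_eq_norm]
      exact PiLp.norm_le_mul_of_sum_sq_le hLbar_pos.le
        (fun j => (abs_of_pos (hL j)).trans_le (hLbar_ge ⟨j, rfl⟩)) (hLip a b)
  exact isAlphaFirmlyNonexpansive_sub_smul (hconv.norm_sq_gradient_sub_le hf hlip) hα.1 ht.le
    ((le_div_iff₀ hLbar_pos).1 ht')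
end
end
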